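/- arXiv:cs/0312048 — 2 statements merged into one kernel-verified Lean document; each statement's English description precedes it below -/
import Mathlib

section
/- Let I be a representation-independent finitary inference procedure. Then for every finite type X, the X-inference procedure I_X is essentially entailment for every objective knowledge base in its domain; that is, if KB = {μ ∈ Δ_X : μ(T) = 1} for some T ⊆ X, KB ∈ dom(I_X), S ⊆ X, and α, β are reals with KB ⊢_{I_X} {μ : α < μ(S) < β}, then KB ⊆ {μ : α ≤ μ(S) ≤ β}. -/
/-- A probability measure (probability mass function) on a finite type. -/
structure PM (X : Type) [Fintype X] where
  pm : X → ℝ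
  nonneg : ∀ x, 0 ≤ pm x
  total : ∑ x, pm x = 1

namespace PM

variable {X Y : Type} [Fintype X] [Fintype Y]

/-- The probability of a set `S`: `μ(S) = ∑_{x ∈ S} μ(x)`. -/
noncomputable def prob (μ : PM X) (S : Set X) : ℝ := ∑ x, S.indicator μ.pm x

lemma prob_nonneg (μ : PM X) (S : Set X) : 0 ≤ μ.prob S :=
  Finset.sum_nonneg fun x _ => Set.indicator_apply_nonneg fun _ => μ.nonneg x

/-- Marginal on the first component: `μ_X(A) = μ(A × Y)`. -/
noncomputable def margFst (μ : PM (X × Y)) : PM X where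
  pm x := ∑ y, μ.pm (x, y)
  nonneg x := Finset.sum_nonneg fun y _ => μ.nonneg (x, y)
  total := by rw [← μ.total, ← Fintype.sum_prod_type]

/-- Marginal on the second component: `μ_Y(B) = μ(X × B)`. -/
noncomputable def margSnd (μ : PM (X × Y)) : PM Y where
  pm y := ∑ x, μ.pm (x, y)
  nonneg y := Finset.sum_nonneg fun x _ => μ.nonneg (x, y)
  total := by rw [← μ.total, ← Fintype.sum_prod_type_right]

/-- Conditioning `μ|S`; the junk value `μ` is returned when `μ(S) = 0`. -/
noncomputable def cond (μ : PM X) (S : Set X) : PM X :=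
  if h : 0 < μ.prob S then
    { pm := fun x => S.indicator μ.pm x / μ.prob S
      nonneg := fun x =>
        div_nonneg (Set.indicator_apply_nonneg fun _ => μ.nonneg x) (le_of_lt h)
      total := by
        rw [← Finset.sum_div]
        exact div_self (ne_of_gt h) }
  else μ

end PM

open PM

/-- An `X`-inference procedure: a partial map on sets of probability measures. -/
structure InfProc (X : Type) [Fintype X] where
  dom : Set (Set (PM X))
  map : Set (PM X) → Set (PM X)
  map_subset : ∀ A ∈ dom, map A ⊆ A
  map_empty_iff : ∀ A ∈ dom, (map A = ∅ ↔ A = ∅)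

/-- `KB ⊢_I θ`. -/
def Infers {X : Type} [Fintype X] (I : InfProc X) (KB θ : Set (PM X)) : Prop :=
  I.map KB ⊆ θ

section Lift

variable {X Y : Type} [Fintype X] [Fintype Y]

/-- A constraint on `Δ_X` viewed as a constraint on `Δ_{X×Y}`: `KB↑`. -/
def liftKB (Y : Type) [Fintype Y] (KB : Set (PM X)) : Set (PM (X × Y)) :=
  {μ | margFst μ ∈ KB}

/-- `proj_X(B) = {μ_X : μ ∈ B}`. -/
def projFst (B : Set (PM (X × Y))) : Set (PM X) := margFst '' B

/-- `ψ ⊆ Δ_{X×Y}` is `X`-conservative over `KB ⊆ Δ_X`. -/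
def Conservative (KB : Set (PM X)) (ψ : Set (PM (X × Y))) : Prop :=
  projFst (liftKB Y KB ∩ ψ) = KB

end Lift

/-- Robustness of a finitary inference procedure. -/
def Robust (I : ∀ (X : Type) [Fintype X], InfProc X) : Prop :=
  ∀ (X Y : Type) [Fintype X] [Fintype Y], ∀ KB φ : Set (PM X),
    KB ∈ (I X).dom → ∀ ψ : Set (PM (X × Y)), Conservative KB ψ →
      (Infers (I X) KB φ ↔ Infers (I (X × Y)) (liftKB Y KB ∩ ψ) (liftKB Y φ))

/-- An inference procedure is essentially entailment. -/
def EssEntail {X : Type} [Fintype X] (I : InfProc X) : Prop :=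
  ∀ KB ∈ I.dom, ∀ (S : Set X) (α β : ℝ),
    Infers I KB {μ | α < μ.prob S ∧ μ.prob S < β} →
    KB ⊆ {μ | α ≤ μ.prob S ∧ μ.prob S ≤ β}

def DI1 (I : ∀ (X : Type) [Fintype X], InfProc X) : Prop :=
  ∀ (X : Type) [Fintype X], ∀ (S : Set X) (α β : ℝ), α ≤ β →
    {μ : PM X | α ≤ μ.prob S ∧ μ.prob S ≤ β} ∈ (I X).dom

def DI2 (I : ∀ (X : Type) [Fintype X], InfProc X) : Prop :=
  ∀ (X Y : Type) [Fintype X] [Fintype Y], ∀ KB : Set (PM X),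
    KB ∈ (I X).dom → liftKB Y KB ∈ (I (X × Y)).dom

def DI3 (I : ∀ (X : Type) [Fintype X], InfProc X) : Prop :=
  ∀ (X : Type) [Fintype X], ∀ KB₁ KB₂ : Set (PM X),
    KB₁ ∈ (I X).dom → KB₂ ∈ (I X).dom → KB₁ ∩ KB₂ ∈ (I X).dom

/-- An `X`-`Y` embedding: a homomorphism of set algebras. -/
structure Emb (X Y : Type) where
  f : Set X → Set Y
  map_union : ∀ S T, f (S ∪ T) = f S ∪ f T
  map_compl : ∀ S, f Sᶜ = (f S)ᶜ

/-- A faithful embedding. -/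
def Emb.Faithful {X Y : Type} (e : Emb X Y) : Prop :=
  ∀ S T : Set X, S ⊆ T ↔ e.f S ⊆ e.f T

section Embeddings

variable {X Y : Type} [Fintype X] [Fintype Y]

/-- `μ` and `ν` correspond under `f`. -/
def Corr (e : Emb X Y) (μ : PM X) (ν : PM Y) : Prop :=
  ∀ S : Set X, μ.prob S = ν.prob (e.f S)

/-- `f*(D)`, the union over `μ ∈ D` of the measures corresponding to `μ`. -/
def fstar (e : Emb X Y) (D : Set (PM X)) : Set (PM Y) :=
  {ν | ∃ μ ∈ D, Corr e μ ν}

/-- Sets of measures `D_X` and `D_Y` correspond under `f`. -/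
def SetCorr (e : Emb X Y) (DX : Set (PM X)) (DY : Set (PM Y)) : Prop :=
  (∀ ν ∈ DY, ∃ μ ∈ DX, Corr e μ ν) ∧ (∀ μ ∈ DX, ∃ ν ∈ DY, Corr e μ ν)

end Embeddings

/-- Representation independence of a finitary inference procedure. -/
def RepInd (I : ∀ (X : Type) [Fintype X], InfProc X) : Prop :=
  ∀ (X Y : Type) [Fintype X] [Fintype Y] (e : Emb X Y), e.Faithful →
    (∀ KB : Set (PM X), KB ∈ (I X).dom ↔ fstar e KB ∈ (I Y).dom) ∧
    (∀ KB : Set (PM X), KB ∈ (I X).dom → ∀ θ : Set (PM X),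
      (Infers (I X) KB θ ↔ Infers (I Y) (fstar e KB) (fstar e θ)))

def DI4 (I : ∀ (X : Type) [Fintype X], InfProc X) : Prop :=
  ∀ (X Y : Type) [Fintype X] [Fintype Y] (e : Emb X Y), e.Faithful →
    ∀ KB : Set (PM X), (KB ∈ (I X).dom ↔ fstar e KB ∈ (I Y).dom)

/-- `A ⇔ B` for sets of measures. -/
def iffSet {α : Type*} (A B : Set α) : Set α := (A ∩ B) ∪ (Aᶜ ∩ Bᶜ)

def DI5 (I : ∀ (X : Type) [Fintype X], InfProc X) : Prop :=
  ∀ (X Y : Type) [Fintype X] [Fintype Y] (KB : Set (PM (X × Y))) (e : Emb X Y),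
    e.Faithful → KB ∈ (I (X × Y)).dom → ∀ φ₁ : Set (PM X),
      KB ∩ iffSet (liftKB Y φ₁) {μ | margSnd μ ∈ fstar e φ₁} ∈ (I (X × Y)).dom

/-- Minimal default independence. -/
def MDI (I : ∀ (X : Type) [Fintype X], InfProc X) : Prop :=
  ∀ (X Y : Type) [Fintype X] [Fintype Y], ∀ KB : Set (PM X), ∀ (S : Set X) (T : Set Y),
    liftKB Y KB ∈ (I (X × Y)).dom →
    Infers (I (X × Y)) (liftKB Y KB)
      {μ | μ.prob (S ×ˢ T) = μ.prob (S ×ˢ (Set.univ : Set Y)) * μ.prob ((Set.univ : Set X) ×ˢ T)}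

/-- `KB` depends only on `S₁, …, S_k`. -/
def DependsOnly {X : Type} [Fintype X] {k : ℕ} (KB : Set (PM X)) (S : Fin k → Set X) : Prop :=
  ∀ μ μ' : PM X, (∀ i, μ.prob (S i) = μ'.prob (S i)) → (μ ∈ KB ↔ μ' ∈ KB)

/-- An atom over `S₁, …, S_k`. -/
def Atom {X : Type} {k : ℕ} (S : Fin k → Set X) (c : Fin k → Bool) : Set X :=
  ⋂ i, (if c i then S i else (S i)ᶜ)

section KL

variable {X : Type} [Fintype X]

/-- Absolute continuity of pmfs. -/
def AbsCont (μ' μ : PM X) : Prop := ∀ x, μ.pm x = 0 → μ'.pm x = 0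

/-- Relative entropy `D(μ'‖μ) ∈ [0,∞]` (it is `⊤` unless `μ' ≪ μ`). -/
noncomputable def KL (μ' μ : PM X) : EReal := by
  classical
  exact if AbsCont μ' μ then
    ((∑ x, μ'.pm x * Real.log (μ'.pm x / μ.pm x) : ℝ) : EReal)
  else ⊤

/-- The relative-entropy projection `μ|θ`. -/
def klProj (μ : PM X) (θ : Set (PM X)) : Set (PM X) :=
  {μ' | μ' ∈ θ ∧ KL μ' μ ≠ ⊤ ∧ ∀ μ'' ∈ θ, KL μ' μ ≤ KL μ'' μ}

/-- `D|θ = ⋃_{μ ∈ D} μ|θ`. -/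
def DProj (D : Set (PM X)) (θ : Set (PM X)) : Set (PM X) :=
  ⋃ μ ∈ D, klProj μ θ

end KL

section Products

variable {n : ℕ} {X : Fin n → Type} [∀ i, Fintype (X i)]

/-- The `i`-th marginal of a measure on a finite product. -/
noncomputable def margPi (μ : PM (∀ i, X i)) (i : Fin n) : PM (X i) where
  pm a := μ.prob {x | x i = a}
  nonneg a := PM.prob_nonneg _ _
  total := by
    classical
    unfold PM.prob
    rw [Finset.sum_comm]
    have h : ∀ x : (∀ i, X i),
        (∑ a, ({y : ∀ j, X j | y i = a}).indicator μ.pm x) = μ.pm x := by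
      intro x
      simp [Set.indicator_apply]
    simp only [h]
    exact μ.total

/-- `μ` is a product measure on `X₁ × ⋯ × Xₙ`. -/
def IsProdPM (μ : PM (∀ i, X i)) : Prop :=
  ∃ μi : ∀ i, PM (X i), ∀ U : ∀ i, Set (X i),
    μ.prob {x | ∀ i, x i ∈ U i} = ∏ i, (μi i).prob (U i)

end Products

/-- The set `P_Π(X)` of product measures. -/
def PPi {n : ℕ} (X : Fin n → Type) [∀ i, Fintype (X i)] : Set (PM (∀ i, X i)) :=
  {μ | IsProdPM μ}

/-- `e` is a product embedding. -/
def IsProdEmb {n : ℕ} {X Y : Fin n → Type} (e : Emb (∀ i, X i) (∀ i, Y i)) : Prop :=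
  ∃ ei : ∀ i, Emb (X i) (Y i), ∀ S : Set (∀ i, X i),
    e.f S = ⋃ x ∈ S, {y | ∀ i, y i ∈ (ei i).f {x i}}

/-!
Let `KB = {μ | μ(T) = 1}` and suppose `S` splits `T` into nonempty parts `S ∩ T ∋ s` and
`T \ S ∋ t` (otherwise `μ(S)` is constant on `KB` and there is nothing to prove). Copy `X` into
`X × ι` and, for each `i : ι`, collapse `X × ι` onto `X` by a surjection that sends slot
`T × {i}` into `S ∩ T` and the other slots into `T \ S`. Pulling back along any of these maps
turns `KB` into the same constraint `{ν | ν(T × ι) = 1}`, so representation independence yields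
one measure `ν` inferred from it that gives each slot `T × {i}` weight `> α`. The slots
partition a set of weight one, hence `|ι| α < 1` for every `|ι| ≥ 2`, i.e. `α ≤ 0`. The same
argument for `Sᶜ` gives `β ≥ 1`.
-/

namespace PM

variable {X Y : Type} [Fintype X] [Fintype Y]

lemma prob_singleton (μ : PM X) (x : X) : μ.prob {x} = μ.pm x := by
  classical
  simp [prob, Set.indicator_apply]

lemma prob_empty (μ : PM X) : μ.prob ∅ = 0 := by
  simp [prob]

lemma ext_prob {μ ν : PM X} (h : ∀ S, μ.prob S = ν.prob S) : μ = ν := by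
  have hpm : μ.pm = ν.pm := funext fun x => by simpa only [prob_singleton] using h {x}
  cases μ
  cases ν
  congr

lemma prob_union (μ : PM X) {S T : Set X} (h : Disjoint S T) :
    μ.prob (S ∪ T) = μ.prob S + μ.prob T := by
  simp only [prob, Set.indicator_union_of_disjoint h, Finset.sum_add_distrib]

lemma prob_univ (μ : PM X) : μ.prob Set.univ = 1 := by
  simp [prob, μ.total]

lemma prob_compl (μ : PM X) (S : Set X) : μ.prob Sᶜ = 1 - μ.prob S := by
  have h := μ.prob_union (disjoint_compl_right (a := S))
  rw [Set.union_compl_self, prob_univ] at h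
  linarith

lemma prob_le_one (μ : PM X) (S : Set X) : μ.prob S ≤ 1 := by
  linarith [μ.prob_compl S, μ.prob_nonneg Sᶜ]

lemma prob_inter_of_prob_eq_one (μ : PM X) {T : Set X} (hT : μ.prob T = 1) (S : Set X) :
    μ.prob (S ∩ T) = μ.prob S := by
  have hTc : μ.prob (S \ T) ≤ μ.prob Tᶜ :=
    Finset.sum_le_sum fun x _ =>
      Set.indicator_le_indicator_of_subset (Set.sdiff_subset_compl S T) μ.nonneg x
  have hdiff : μ.prob (S \ T) = 0 := by
    linarith [μ.prob_compl T, μ.prob_nonneg (S \ T)]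
  rw [← Set.inter_union_sdiff S T, μ.prob_union Set.disjoint_sdiff_inter.symm, hdiff,
    add_zero, Set.inter_union_sdiff]

lemma sum_prob_prod_singleton {ι : Type} [Fintype ι] (ν : PM (X × ι)) (A : Set X) :
    ∑ i, ν.prob (A ×ˢ {i}) = ν.prob (A ×ˢ Set.univ) := by
  unfold prob
  rw [Finset.sum_comm]
  refine Finset.sum_congr rfl fun p _ => ?_
  rw [Finset.sum_eq_single p.2 (fun i _ hi => ?_) (by simp)]
  · by_cases hp : p.1 ∈ A <;> simp [hp]
  · exact Set.indicator_of_notMem (by simp [Ne.symm hi]) _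

open scoped Classical in
noncomputable def map (g : Y → X) (ν : PM Y) : PM X where
  pm x := ∑ y with g y = x, ν.pm y
  nonneg _ := Finset.sum_nonneg fun y _ => ν.nonneg y
  total := (Finset.sum_fiberwise _ g _).trans ν.total

lemma prob_map (g : Y → X) (ν : PM Y) (S : Set X) :
    (map g ν).prob S = ν.prob (g ⁻¹' S) := by
  classical
  rw [prob, prob, ← Finset.sum_fiberwise _ g]
  refine Finset.sum_congr rfl fun x _ => ?_
  by_cases hx : x ∈ S
  · rw [Set.indicator_of_mem hx]
    refine Finset.sum_congr rfl fun y hy => (Set.indicator_of_mem ?_ _).symm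
    simpa [(Finset.mem_filter.mp hy).2] using hx
  · rw [Set.indicator_of_notMem hx]
    refine (Finset.sum_eq_zero fun y hy => Set.indicator_of_notMem ?_ _).symm
    simpa [(Finset.mem_filter.mp hy).2] using hx

end PM

namespace Emb

variable {X Y : Type}

def preimage (g : Y → X) : Emb X Y where
  f S := g ⁻¹' S
  map_union _ _ := Set.preimage_union
  map_compl _ := Set.preimage_compl

lemma faithful_preimage {g : Y → X} (hg : g.Surjective) : (preimage g).Faithful :=
  fun _ _ => hg.preimage_subset_preimage_iff.symm

variable [Fintype X] [Fintype Y]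

lemma corr_preimage_iff (g : Y → X) (μ : PM X) (ν : PM Y) :
    Corr (preimage g) μ ν ↔ μ = PM.map g ν := by
  refine ⟨fun h => PM.ext_prob fun S => ?_, ?_⟩
  · rw [PM.prob_map]
    exact h S
  · rintro rfl S
    exact PM.prob_map g ν S

lemma fstar_preimage (g : Y → X) (D : Set (PM X)) :
    fstar (preimage g) D = {ν | PM.map g ν ∈ D} := by
  ext ν
  simp [fstar, corr_preimage_iff]

end Emb

namespace InfProc

variable {X : Type} [Fintype X]

lemma map_nonempty (I : InfProc X) {A : Set (PM X)} (hA : A ∈ I.dom) (hne : A.Nonempty) :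
    (I.map A).Nonempty :=
  Set.nonempty_iff_ne_empty.mpr fun h => hne.ne_empty ((I.map_empty_iff A hA).mp h)

lemma exists_mem_of_infers (I : InfProc X) {A θ : Set (PM X)} (hA : A ∈ I.dom)
    (hne : A.Nonempty) (h : Infers I A θ) : ∃ ρ ∈ A, ρ ∈ θ :=
  let ⟨ρ, hρ⟩ := I.map_nonempty hA hne
  ⟨ρ, I.map_subset A hA hρ, h hρ⟩

lemma subset_of_infers_of_prob_eq (I : InfProc X) {A : Set (PM X)} (hA : A ∈ I.dom)
    {S : Set X} {c α β : ℝ} (hc : ∀ μ ∈ A, μ.prob S = c)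
    (h : Infers I A {μ | α < μ.prob S ∧ μ.prob S < β}) :
    A ⊆ {μ | α ≤ μ.prob S ∧ μ.prob S ≤ β} := by
  intro μ hμ
  obtain ⟨ρ, hρA, hρα, hρβ⟩ := I.exists_mem_of_infers hA ⟨μ, hμ⟩ h
  rw [hc ρ hρA] at hρα hρβ
  rw [Set.mem_ofPred_eq, hc μ hμ]
  exact ⟨hρα.le, hρβ.le⟩

end InfProc

section SplitMap

variable {X ι : Type} (S T : Set X) (s t : X) (i : ι)

open scoped Classical in
noncomputable def splitMap (p : X × ι) : X :=
  if p.1 ∈ T then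
    if p.2 = i then (if p.1 ∈ S then p.1 else s) else (if p.1 ∈ S then t else p.1)
  else p.1

lemma splitMap_surjective [Nontrivial ι] :
    (splitMap S T s t i).Surjective := by
  intro x
  obtain ⟨j, hj⟩ := exists_ne i
  by_cases hxT : x ∈ T
  · by_cases hxS : x ∈ S
    · exact ⟨(x, i), by simp [splitMap, hxT, hxS]⟩
    · exact ⟨(x, j), by simp [splitMap, hxT, hxS, hj]⟩
  · exact ⟨(x, i), by simp [splitMap, hxT]⟩

variable {S T s t}

lemma preimage_splitMap_eq_prod_univ (hs : s ∈ T) (ht : t ∈ T) :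
    splitMap S T s t i ⁻¹' T = T ×ˢ Set.univ := by
  ext ⟨x, j⟩
  by_cases hxT : x ∈ T
  · by_cases hj : j = i <;> by_cases hxS : x ∈ S <;> simp [splitMap, hxT, hxS, hj, hs, ht]
  · simp [splitMap, hxT]

lemma preimage_splitMap_inter_prod_univ (hs : s ∈ S) (ht : t ∉ S) :
    splitMap S T s t i ⁻¹' S ∩ T ×ˢ Set.univ = T ×ˢ {i} := by
  ext ⟨x, j⟩
  by_cases hxT : x ∈ T
  · by_cases hj : j = i <;> by_cases hxS : x ∈ S <;> simp [splitMap, hxT, hxS, hj, hs, ht]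
  · simp [splitMap, hxT]

end SplitMap

namespace RepInd

variable {I : ∀ (X : Type) [Fintype X], InfProc X} {X Y : Type} [Fintype X] [Fintype Y]
  {e : Emb X Y} {KB : Set (PM X)} {S T : Set X} {s t : X} {α : ℝ}

lemma fstar_mem_dom (hri : RepInd I) (he : e.Faithful) (hKB : KB ∈ (I X).dom) :
    fstar e KB ∈ (I Y).dom :=
  ((hri X Y e he).1 KB).mp hKB

lemma infers_fstar (hri : RepInd I) (he : e.Faithful) (hKB : KB ∈ (I X).dom)
    {θ : Set (PM X)} (h : Infers (I X) KB θ) : Infers (I Y) (fstar e KB) (fstar e θ) :=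
  ((hri X Y e he).2 KB hKB θ).mp h

lemma map_fstar_nonempty (hri : RepInd I) (he : e.Faithful) (hKB : KB ∈ (I X).dom)
    (hne : KB.Nonempty) : ((I Y).map (fstar e KB)).Nonempty := by
  have hX : ¬ Infers (I X) KB ∅ := fun h =>
    ((I X).map_nonempty hKB hne).ne_empty (Set.subset_empty_iff.mp h)
  rw [(hri X Y e he).2 KB hKB ∅] at hX
  simpa [Infers, fstar, Set.subset_empty_iff, Set.nonempty_iff_ne_empty] using hX

lemma card_mul_lt_one_of_infers (hri : RepInd I) (hs : s ∈ S ∩ T) (ht : t ∈ T \ S)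
    (hdom : {μ : PM X | μ.prob T = 1} ∈ (I X).dom) (hne : {μ : PM X | μ.prob T = 1}.Nonempty)
    (hinf : Infers (I X) {μ | μ.prob T = 1} {μ | α < μ.prob S})
    (ι : Type) [Fintype ι] [Nontrivial ι] :
    Fintype.card ι * α < 1 := by
  have he (i : ι) := Emb.faithful_preimage (splitMap_surjective S T s t i)
  have hKB (i : ι) : fstar (Emb.preimage (splitMap S T s t i)) {μ | μ.prob T = 1}
      = {ν | ν.prob (T ×ˢ Set.univ) = 1} := by
    ext ν
    simp [Emb.fstar_preimage, PM.prob_map, preimage_splitMap_eq_prod_univ i hs.2 ht.1]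
  obtain ⟨i₀⟩ := (inferInstance : Nonempty ι)
  obtain ⟨ν, hν⟩ := hri.map_fstar_nonempty (he i₀) hdom hne
  have hdom' := hri.fstar_mem_dom (he i₀) hdom
  rw [hKB] at hν hdom'
  have hνT : ν.prob (T ×ˢ Set.univ) = 1 := (I (X × ι)).map_subset _ hdom' hν
  have hslot (i : ι) : α < ν.prob (T ×ˢ {i}) := by
    have h := hri.infers_fstar (he i) hdom hinf (hKB i ▸ hν)
    simp only [Emb.fstar_preimage, Set.mem_ofPred_eq, PM.prob_map] at h
    rwa [← preimage_splitMap_inter_prod_univ i hs.1 ht.2, ν.prob_inter_of_prob_eq_one hνT]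
  calc Fintype.card ι * α = ∑ _i : ι, α := by simp
    _ < ∑ i, ν.prob (T ×ˢ {i}) :=
      Finset.sum_lt_sum_of_nonempty Finset.univ_nonempty fun i _ => hslot i
    _ = 1 := by rw [PM.sum_prob_prod_singleton, hνT]

end RepInd

lemma nonpos_of_forall_nat_add_two_mul_lt_one {α : ℝ} (h : ∀ n : ℕ, (n + 2) * α < 1) :
    α ≤ 0 := by
  by_contra! hα
  obtain ⟨n, hn⟩ := exists_nat_gt α⁻¹
  have : 1 < n * α := by rwa [inv_lt_iff_one_lt_mul₀ hα] at hn
  linarith [h n]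

/-- a representation-independent finitary inference procedure is
essentially entailment on every objective knowledge base in its domain. -/
theorem stmt7 (I : ∀ (X : Type) [Fintype X], InfProc X) (hri : RepInd I)
    (X : Type) [Fintype X] (T S : Set X) (KB : Set (PM X))
    (hKB : KB = {μ : PM X | μ.prob T = 1}) (hdom : KB ∈ (I X).dom)
    (α β : ℝ)
    (hinf : Infers (I X) KB {μ : PM X | α < μ.prob S ∧ μ.prob S < β}) :
    KB ⊆ {μ : PM X | α ≤ μ.prob S ∧ μ.prob S ≤ β} := by
  subst hKB
  rcases (S ∩ T).eq_empty_or_nonempty with hST | ⟨s, hs⟩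
  · refine (I X).subset_of_infers_of_prob_eq hdom (c := 0) (fun μ hμ => ?_) hinf
    rw [← μ.prob_inter_of_prob_eq_one hμ, hST, PM.prob_empty]
  rcases (T \ S).eq_empty_or_nonempty with hTS | ⟨t, ht⟩
  · refine (I X).subset_of_infers_of_prob_eq hdom (c := 1) (fun μ hμ => ?_) hinf
    rw [← μ.prob_inter_of_prob_eq_one hμ,
      Set.inter_eq_right.mpr (Set.sdiff_eq_empty.mp hTS), hμ]
  rintro μ (hμ : μ.prob T = 1)
  have hne : {ν : PM X | ν.prob T = 1}.Nonempty := ⟨μ, hμ⟩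
  have hα : α ≤ 0 := nonpos_of_forall_nat_add_two_mul_lt_one fun n => by
    simpa using hri.card_mul_lt_one_of_infers hs ht hdom hne (hinf.trans fun _ h => h.1) (Fin (n + 2))
  have hβ : 1 - β ≤ 0 := by
    have hinfc : Infers (I X) {ν | ν.prob T = 1} {ν | 1 - β < ν.prob Sᶜ} :=
      hinf.trans fun ν h => by
        rw [Set.mem_ofPred_eq, ν.prob_compl]
        linarith [h.2]
    exact nonpos_of_forall_nat_add_two_mul_lt_one fun n => by
      simpa using hri.card_mul_lt_one_of_infers (S := Sᶜ) ⟨ht.2, ht.1⟩ ⟨hs.2, not_not_intro hs.1⟩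
        hdom hne hinfc (Fin (n + 2))
  exact ⟨hα.trans (μ.prob_nonneg S), (μ.prob_le_one S).trans (by linarith)⟩
end

section
/- Let X and Y be finite types, let f be a faithful X-Y embedding, and let D_X ⊆ Δ_X and D_Y ⊆ Δ_Y. Then the following are equivalent: (a) D_X and D_Y correspond under f; (b) for every constraint θ ⊆ Δ_X: D_X ⊆ θ iff D_Y ⊆ f*(θ). -/
open PM

lemma PM.prob_singleton_s12 {X : Type} [Fintype X] (μ : PM X) (x : X) :
    μ.prob {x} = μ.pm x := by
  classical
  simp [PM.prob, Set.indicator_apply]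

lemma PM.ext' {X : Type} [Fintype X] {μ μ' : PM X} (h : μ.pm = μ'.pm) : μ = μ' := by
  cases μ; cases μ'; simpa using h

lemma Corr.unique {X Y : Type} [Fintype X] [Fintype Y] {e : Emb X Y}
    {μ μ' : PM X} {ν : PM Y} (h : Corr e μ ν) (h' : Corr e μ' ν) : μ = μ' := by
  apply PM.ext'
  funext x
  have := (h {x}).trans (h' {x}).symm
  simpa [PM.prob_singleton_s12] using this

/-- for a faithful embedding, sets of measures correspond iff
they support exactly the corresponding conclusions. -/
theorem stmt12 {X Y : Type} [Fintype X] [Fintype Y] (e : Emb X Y)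
    (hf : e.Faithful) (DX : Set (PM X)) (DY : Set (PM Y)) :
    SetCorr e DX DY ↔ ∀ θ : Set (PM X), (DX ⊆ θ ↔ DY ⊆ fstar e θ) := by
  constructor
  · rintro ⟨h1, h2⟩ θ
    constructor
    · intro hsub ν hν
      obtain ⟨μ, hμ, hc⟩ := h1 ν hν
      exact ⟨μ, hsub hμ, hc⟩
    · intro hsub μ hμ
      obtain ⟨ν, hν, hc⟩ := h2 μ hμ
      obtain ⟨μ', hμ', hc'⟩ := hsub hν
      rw [Corr.unique hc hc']; exact hμ'
  · intro h
    have h1 : ∀ ν ∈ DY, ∃ μ ∈ DX, Corr e μ ν := fun ν hν =>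
      ((h DX).mp (fun _ hx => hx)) hν
    refine ⟨h1, fun μ hμ => ?_⟩
    by_contra hcon
    push_neg at hcon
    have hne : ¬ DX ⊆ {μ}ᶜ := fun hs => hs hμ rfl
    have : ¬ DY ⊆ fstar e ({μ}ᶜ) := fun hs => hne ((h _).mpr hs)
    obtain ⟨ν, hν, hnν⟩ := Set.not_subset.mp this
    obtain ⟨μ', hμ', hc⟩ := h1 ν hν
    rcases eq_or_ne μ' μ with rfl | hne'
    · exact hcon ν hν hc
    · exact hnν ⟨μ', hne', hc⟩
end
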